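/- arXiv:1706.02491 — 5 statements merged into one kernel-verified Lean document; each statement's English description precedes it below -/
import Mathlib

section
/- Let A be a commutative ring, S and T multiplicative subsets of A with canonical maps φ : A → S⁻¹A and ψ : A → T⁻¹A, and suppose α : S⁻¹A → T⁻¹A is a ring homomorphism with α ∘ φ = ψ. Let U := {ζ ∈ S⁻¹A : α(ζ) is a unit in T⁻¹A}. Then α is the localization at U, i.e., the induced map U⁻¹(S⁻¹A) → T⁻¹A is an isomorphism of rings. -/
theorem isLocalization_atUnits_of_comp {A : Type*} [CommRing A] (S T : Submonoid A)
    (α : Localization S →+* Localization T)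
    (hα : α.comp (algebraMap A (Localization S)) = algebraMap A (Localization T)) :
    letI := α.toAlgebra
    IsLocalization ((IsUnit.submonoid (Localization T)).comap α) (Localization T) := by
  letI := α.toAlgebra
  have halg : (algebraMap (Localization S) (Localization T)) = α := rfl
  constructor
  constructor
  · rintro ⟨x, hx⟩
    exact hx
  · intro z
    obtain ⟨⟨a, t⟩, hz⟩ := IsLocalization.surj T z
    refine ⟨⟨algebraMap A (Localization S) a, ⟨algebraMap A (Localization S) t, ?_⟩⟩, ?_⟩
    · show IsUnit (α (algebraMap A (Localization S) t))
      rw [← RingHom.comp_apply, hα]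
      exact IsLocalization.map_units (Localization T) t
    · show z * α (algebraMap A (Localization S) (t : A)) = α (algebraMap A (Localization S) a)
      rw [← RingHom.comp_apply, ← RingHom.comp_apply, hα]
      exact hz
  · intro x y h
    rw [halg] at h
    have h' : α (x - y) = 0 := by rw [map_sub, h, sub_self]
    obtain ⟨⟨a, s⟩, hd⟩ := IsLocalization.surj S (x - y)
    have ha : algebraMap A (Localization T) a = 0 := by
      rw [← hα, RingHom.comp_apply, ← hd, map_mul, h', zero_mul]
    obtain ⟨t, ht⟩ := (IsLocalization.map_eq_zero_iff T (Localization T) a).mp ha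
    refine ⟨⟨algebraMap A (Localization S) (t : A), ?_⟩, ?_⟩
    · show IsUnit (α (algebraMap A (Localization S) (t : A)))
      rw [← RingHom.comp_apply, hα]
      exact IsLocalization.map_units (Localization T) t
    · have hs := IsLocalization.map_units (Localization S) s
      have hz : algebraMap A (Localization S) (t : A) * (x - y)
          * algebraMap A (Localization S) (s : A) = 0 := by
        rw [mul_assoc, hd, ← map_mul, ht, map_zero]
      have h0 : algebraMap A (Localization S) (t : A) * (x - y) = 0 :=
        hs.mul_right_cancel (hz.trans (zero_mul _).symm)
      simpa [mul_sub, sub_eq_zero] using h0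
end

section
/- Let A be a commutative ring, S and T multiplicative subsets of A, and α : S⁻¹A → T⁻¹A a ring homomorphism compatible with the canonical maps from A. Then for every ζ ∈ S⁻¹A there exists t ∈ T such that the image of t in S⁻¹A times ζ lies in the image of A → S⁻¹A. -/
theorem exists_mul_mem_range_of_comp {A : Type*} [CommRing A] (S T : Submonoid A)
    (α : Localization S →+* Localization T)
    (hα : α.comp (algebraMap A (Localization S)) = algebraMap A (Localization T)) :
    ∀ ζ : Localization S, ∃ t ∈ T,
      algebraMap A (Localization S) t * ζ ∈ Set.range (algebraMap A (Localization S)) := by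
  intro ζ
  obtain ⟨⟨a, s, hs⟩, rfl⟩ : ∃ p : A × S, ζ = Localization.mk p.1 p.2 := by
    induction ζ using Localization.induction_on with
    | H p => exact ⟨p, rfl⟩
  -- s becomes a unit in Localization T
  have hunit : IsUnit (algebraMap A (Localization T) s) := by
    rw [← hα, RingHom.comp_apply]
    exact (IsLocalization.map_units (M := S) (Localization S) ⟨s, hs⟩).map α
  obtain ⟨u, hu⟩ := hunit
  obtain ⟨⟨b, t'⟩, hb⟩ := IsLocalization.surj (M := T) (S := Localization T) ((u⁻¹ : (Localization T)ˣ) : Localization T)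
  -- algebraMap (s * b) = algebraMap t' in Localization T
  have key : algebraMap A (Localization T) (s * b) = algebraMap A (Localization T) (t' : A) := by
    have : (u : Localization T) * ((u⁻¹ : (Localization T)ˣ) : Localization T) = 1 := by
      rw [← Units.val_mul, mul_inv_cancel, Units.val_one]
    calc algebraMap A (Localization T) (s * b)
        = algebraMap A (Localization T) s * algebraMap A (Localization T) b := by
          rw [map_mul]
      _ = (u : Localization T) * (((u⁻¹ : (Localization T)ˣ) : Localization T) * algebraMap A (Localization T) (t' : A)) := by
          rw [hu, hb]
      _ = algebraMap A (Localization T) (t' : A) := by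
          rw [← mul_assoc, this, one_mul]
  obtain ⟨c, hc⟩ := (IsLocalization.eq_iff_exists (M := T) (S := Localization T)).mp key
  refine ⟨c * t', mul_mem c.2 t'.2, c * b * a, ?_⟩
  simp only [← Localization.mk_one_eq_algebraMap, Localization.mk_mul,
    Localization.mk_eq_mk_iff, Localization.r_iff_exists]
  refine ⟨⟨s, hs⟩, ?_⟩
  simp only [Submonoid.coe_mul, OneMemClass.coe_one, one_mul, mul_one]
  -- hc : c * (s * b) = c * t'
  linear_combination s * a * hc
end

section
/- Let k be a field and A = k[x⁽ⁿ⁾ⱼ : n ≥ 1, 1 ≤ j ≤ n] the polynomial ring over k in countably many variables grouped in blocks, with 𝔭ₙ the prime ideal of A generated by the n-th block of variables x⁽ⁿ⁾₁, …, x⁽ⁿ⁾ₙ. If 𝔞 is an ideal of A such that 𝔞 ⊆ ⋃ₙ 𝔭ₙ, then there exists n with 𝔞 ⊆ 𝔭ₙ. -/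
universe u

/-- The index set of the variables of Nagata's polynomial ring: for each `n : ℕ` there is a
block of `n + 1` variables (so blocks of every finite positive size occur). -/
abbrev NagataIdx : Type := Σ n : ℕ, Fin (n + 1)

/-- Nagata's polynomial ring over `k` in countably many variables grouped in blocks. -/
abbrev NagataA (k : Type u) [Field k] : Type u := MvPolynomial NagataIdx k

/-- The ideal of `NagataA k` generated by the `n`-th block of variables. -/
noncomputable def nagataPrime (k : Type u) [Field k] (n : ℕ) : Ideal (NagataA k) :=
  Ideal.span (MvPolynomial.X '' {i : NagataIdx | i.1 = n})

open MvPolynomial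

lemma mem_nagataPrime_iff {k : Type u} [Field k] {n : ℕ} {p : NagataA k} :
    p ∈ nagataPrime k n ↔ ∀ m ∈ p.support, ∃ i : NagataIdx, i.1 = n ∧ m i ≠ 0 := by
  rw [nagataPrime, mem_ideal_span_X_image]
  simp [Set.mem_setOf_eq]

/-- The algebra map killing the `n`-th block of variables. -/
noncomputable def nagataPsi (k : Type u) [Field k] (n : ℕ) : NagataA k →ₐ[k] NagataA k :=
  MvPolynomial.aeval (fun i : NagataIdx => if i.1 = n then 0 else MvPolynomial.X i)

lemma nagataPsi_monomial {k : Type u} [Field k] (n : ℕ) (m : NagataIdx →₀ ℕ) (c : k)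
    (hm : ∀ i ∈ m.support, i.1 ≠ n) :
    nagataPsi k n (monomial m c) = monomial m c := by
  rw [nagataPsi, aeval_monomial]
  have : (m.prod fun i e => (if i.1 = n then 0 else X i) ^ e)
      = m.prod fun i e => (X i : NagataA k) ^ e :=
    Finset.prod_congr rfl fun i hi => by simp [hm i hi]
  rw [this]
  rw [monomial_eq]
  rfl

lemma nagataPsi_monomial_zero {k : Type u} [Field k] (n : ℕ) (m : NagataIdx →₀ ℕ) (c : k)
    (i : NagataIdx) (hi : i ∈ m.support) (hin : i.1 = n) :
    nagataPsi k n (monomial m c) = 0 := by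
  rw [nagataPsi, aeval_monomial, Finsupp.prod]
  rw [Finset.prod_eq_zero hi (by
    rw [if_pos hin, zero_pow (Finsupp.mem_support_iff.mp hi)])]
  rw [mul_zero]

lemma nagataPrime_eq_ker (k : Type u) [Field k] (n : ℕ) :
    nagataPrime k n = RingHom.ker (nagataPsi k n : NagataA k →+* NagataA k) := by
  classical
  apply le_antisymm
  · rw [nagataPrime, Ideal.span_le]
    rintro _ ⟨i, hi, rfl⟩
    simp only [SetLike.mem_coe, RingHom.mem_ker, AlgHom.coe_ringHom_mk]
    show nagataPsi k n (X i) = 0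
    rw [nagataPsi, aeval_X, if_pos (show i.1 = n from hi)]
  · intro p hp
    rw [RingHom.mem_ker] at hp
    rw [mem_nagataPrime_iff]
    by_contra hcon
    push_neg at hcon
    obtain ⟨m, hm, hm'⟩ := hcon
    have key : coeff m (nagataPsi k n p) = coeff m p := by
      conv_lhs => rw [p.as_sum, map_sum]
      rw [coeff_sum]
      rw [Finset.sum_eq_single m]
      · rw [nagataPsi_monomial n m _ (fun i hi => by
          intro hin
          exact Finsupp.mem_support_iff.mp hi (hm' i hin)), coeff_monomial, if_pos rfl]
      · intro d hd hdm
        by_cases hgood : ∀ i ∈ d.support, i.1 ≠ n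
        · rw [nagataPsi_monomial n d _ hgood, coeff_monomial, if_neg hdm]
        · push_neg at hgood
          obtain ⟨i, hi, hin⟩ := hgood
          rw [nagataPsi_monomial_zero n d _ i hi hin, coeff_zero]
      · intro hmm
        exact absurd hm hmm
    have hp' : nagataPsi k n p = 0 := hp
    rw [hp', coeff_zero] at key
    exact (mem_support_iff.mp hm) key.symm

lemma nagataPrime_isPrime (k : Type u) [Field k] (n : ℕ) :
    (nagataPrime k n).IsPrime := by
  rw [nagataPrime_eq_ker]
  exact RingHom.ker_isPrime _

/-- Blocks appearing in a polynomial. -/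
noncomputable def nagataBlocks {k : Type u} [Field k] (p : NagataA k) : Finset ℕ :=
  p.support.biUnion (fun m => m.support.image Sigma.fst)

lemma mem_nagataBlocks_of_mem {k : Type u} [Field k] {p : NagataA k} {n : ℕ}
    (hp : p ≠ 0) (h : p ∈ nagataPrime k n) : n ∈ nagataBlocks p := by
  obtain ⟨m, hm⟩ := Finset.nonempty_iff_ne_empty.mpr
    (fun he => hp (support_eq_empty.mp he))
  obtain ⟨i, hin, hi⟩ := mem_nagataPrime_iff.mp h m hm
  exact Finset.mem_biUnion.mpr ⟨m, hm, Finset.mem_image.mpr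
    ⟨i, Finsupp.mem_support_iff.mpr hi, hin⟩⟩

theorem nagata_prime_avoidance (k : Type u) [Field k] (𝔞 : Ideal (NagataA k))
    (h : (𝔞 : Set (NagataA k)) ⊆ ⋃ n : ℕ, (nagataPrime k n : Set (NagataA k))) :
    ∃ n : ℕ, 𝔞 ≤ nagataPrime k n := by
  classical
  by_contra hcon
  push_neg at hcon
  -- pick f ∈ 𝔞 \ 𝔭₀ ; in particular f ≠ 0
  obtain ⟨f, hf𝔞, hf0⟩ := SetLike.not_le_iff_exists.mp (hcon 0)
  have hfne : f ≠ 0 := fun hf => hf0 (hf ▸ (nagataPrime k 0).zero_mem)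
  -- the finite set of blocks n with f ∈ 𝔭ₙ
  set T : Finset ℕ := (nagataBlocks f).filter (fun n => f ∈ nagataPrime k n) with hT
  have hmemT : ∀ n : ℕ, f ∈ nagataPrime k n → n ∈ T := fun n hn =>
    Finset.mem_filter.mpr ⟨mem_nagataBlocks_of_mem hfne hn, hn⟩
  have hTne : T.Nonempty := by
    obtain ⟨n, hfS⟩ := Set.mem_iUnion.mp (h hf𝔞)
    exact ⟨n, hmemT n hfS⟩
  -- finite prime avoidance: find g ∈ 𝔞 avoiding all 𝔭ₙ for n ∈ T
  have hnotsub : ¬ ((𝔞 : Set (NagataA k)) ⊆ ⋃ n ∈ (T : Set ℕ), (nagataPrime k n : Set (NagataA k))) := by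
    intro hsub
    obtain ⟨n, _, hn⟩ := (Ideal.subset_union_prime 0 0
      (fun i _ _ _ => nagataPrime_isPrime k i)).mp hsub
    exact hcon n hn
  obtain ⟨g, hg𝔞, hg⟩ := Set.not_subset.mp hnotsub
  have hgT : ∀ n ∈ T, g ∉ nagataPrime k n := by
    intro n hn hgn
    exact hg (Set.mem_biUnion hn hgn)
  -- a fresh block m
  set S : Finset ℕ := nagataBlocks f ∪ nagataBlocks g with hS
  set m : ℕ := S.sup id + 1 with hm
  have hmS : m ∉ S := fun hmem => by
    have := Finset.le_sup (f := id) hmem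
    simp only [id_eq] at this
    omega
  have hmf : m ∉ nagataBlocks f := fun hmem => hmS (Finset.mem_union_left _ hmem)
  have hmg : m ∉ nagataBlocks g := fun hmem => hmS (Finset.mem_union_right _ hmem)
  set i : NagataIdx := ⟨m, 0⟩ with hi
  -- the element f + X i * g is in 𝔞, hence in some 𝔭ₙ
  have he𝔞 : f + X i * g ∈ 𝔞 := 𝔞.add_mem hf𝔞 (𝔞.mul_mem_left _ hg𝔞)
  obtain ⟨n, heS⟩ := Set.mem_iUnion.mp (h he𝔞)
  rw [SetLike.mem_coe, mem_nagataPrime_iff] at heS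
  -- monomials of f don't involve i
  have hfi : ∀ d ∈ f.support, d i = 0 := by
    intro d hd
    by_contra hdi
    exact hmf (Finset.mem_biUnion.mpr ⟨d, hd, Finset.mem_image.mpr
      ⟨i, Finsupp.mem_support_iff.mpr hdi, rfl⟩⟩)
  -- support of X i * g
  have hsuppXg : (X i * g : NagataA k).support
      = g.support.map (addLeftEmbedding (Finsupp.single i 1)) := support_X_mul i g
  -- supports are disjoint
  have hdisj : Disjoint f.support (X i * g : NagataA k).support := by
    rw [Finset.disjoint_left]
    intro d hd hd'
    rw [hsuppXg, Finset.mem_map] at hd'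
    obtain ⟨e, _, rfl⟩ := hd'
    have := hfi _ hd
    simp [addLeftEmbedding, Finsupp.single_apply] at this
  have hsupp : (f + X i * g : NagataA k).support
      = f.support ∪ (X i * g : NagataA k).support := Finsupp.support_add_eq hdisj
  -- f ∈ 𝔭ₙ, so n ∈ T
  have hfn : f ∈ nagataPrime k n := by
    rw [mem_nagataPrime_iff]
    intro d hd
    exact heS d (hsupp ▸ Finset.mem_union_left _ hd)
  have hnT : n ∈ T := hmemT n hfn
  -- but also g ∈ 𝔭ₙ, contradiction
  have hnm : n ≠ m := by
    intro hnm
    exact hmf (hnm ▸ mem_nagataBlocks_of_mem hfne hfn)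
  apply hgT n hnT
  rw [mem_nagataPrime_iff]
  intro d hd
  have hde : Finsupp.single i 1 + d ∈ (f + X i * g : NagataA k).support := by
    rw [hsupp, hsuppXg]
    exact Finset.mem_union_right _ (Finset.mem_map.mpr ⟨d, hd, rfl⟩)
  obtain ⟨j, hjn, hj⟩ := heS _ hde
  refine ⟨j, hjn, ?_⟩
  intro hdj
  apply hj
  rw [Finsupp.add_apply, hdj, add_zero, Finsupp.single_apply]
  rw [if_neg]
  intro hij
  apply hnm
  rw [← hjn, ← hij]
end

section
/- Let k be a field, A the polynomial ring over k in blocks of variables x⁽ⁿ⁾₁, …, x⁽ⁿ⁾ₙ for each n ≥ 1, and 𝔭ₙ the prime ideal generated by the n-th block. Then the localization A_{𝔭ₙ} is isomorphic to the localization of the polynomial ring K[x₁, …, xₙ] at the maximal ideal (x₁, …, xₙ), where K is the fraction field of the polynomial subring of A generated by all variables outside the n-th block. -/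
universe u

open MvPolynomial

attribute [local instance] MvPolynomial.algebraMvPolynomial

noncomputable section NagataAux

variable (k : Type u) [Field k] (n : ℕ)

/-- The `n`-th block of `NagataIdx` is equivalent to `Fin (n+1)`. -/
def nagataBlockEquiv : {i : NagataIdx // i.1 = n} ≃ Fin (n + 1) where
  toFun i := Fin.cast (by rw [i.2]) i.1.2
  invFun j := ⟨⟨n, j⟩, rfl⟩
  left_inv := by rintro ⟨⟨m, a⟩, (h : m = n)⟩; subst h; rfl
  right_inv j := rfl

open Classical in
/-- Splitting the index set into the `n`-th block and the rest. -/
def nagataIdxEquiv : NagataIdx ≃ (Fin (n + 1)) ⊕ {i : NagataIdx // i.1 ≠ n} :=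
  (Equiv.sumCompl (fun i : NagataIdx => i.1 = n)).symm.trans
    (Equiv.sumCongr (nagataBlockEquiv n) (Equiv.refl _))

abbrev NagataR : Type u := MvPolynomial {i : NagataIdx // i.1 ≠ n} k

abbrev NagataK : Type u := FractionRing (NagataR k n)

abbrev NagataB : Type u := MvPolynomial (Fin (n + 1)) (NagataR k n)

abbrev NagataKX : Type u := MvPolynomial (Fin (n + 1)) (NagataK k n)

/-- The isomorphism `A ≃ R[x₁,…,x_{n+1}]`. -/
def nagataEquivB : NagataA k ≃+* NagataB k n :=
  ((renameEquiv k (nagataIdxEquiv n)).trans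
    (sumAlgEquiv k (Fin (n + 1)) {i : NagataIdx // i.1 ≠ n})).toRingEquiv

lemma nagataEquivB_X {i : NagataIdx} (hi : i.1 = n) :
    nagataEquivB k n (X i) = X (nagataBlockEquiv n ⟨i, hi⟩) := by
  classical
  have he : nagataIdxEquiv n i = Sum.inl (nagataBlockEquiv n ⟨i, hi⟩) := by
    simp only [nagataIdxEquiv, Equiv.trans_apply]
    rw [Equiv.sumCompl_symm_apply_of_pos (p := fun j : NagataIdx => j.1 = n) hi]
    rfl
  show (sumAlgEquiv k (Fin (n + 1)) {i : NagataIdx // i.1 ≠ n})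
      ((renameEquiv k (nagataIdxEquiv n)) (X i)) = _
  rw [renameEquiv_apply, rename_X, he]
  simp [sumAlgEquiv_X_inl]

lemma nagata_map_prime :
    (nagataPrime k n).map (nagataEquivB k n) =
      Ideal.span (Set.range (X : Fin (n + 1) → NagataB k n)) := by
  rw [nagataPrime, Ideal.map_span]
  congr 1
  ext f
  constructor
  · rintro ⟨_, ⟨i, hi, rfl⟩, rfl⟩
    exact ⟨nagataBlockEquiv n ⟨i, hi⟩, (nagataEquivB_X k n hi).symm⟩
  · rintro ⟨j, rfl⟩
    refine ⟨X (⟨n, j⟩ : NagataIdx), ⟨⟨n, j⟩, rfl, rfl⟩, ?_⟩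
    show nagataEquivB k n (X (⟨n, j⟩ : NagataIdx)) = X j
    exact nagataEquivB_X k n (i := (⟨n, j⟩ : NagataIdx)) rfl

lemma nagata_comap_span :
    (Ideal.span (Set.range (X : Fin (n + 1) → NagataKX k n))).comap
        (algebraMap (NagataB k n) (NagataKX k n)) =
      Ideal.span (Set.range (X : Fin (n + 1) → NagataB k n)) := by
  have hinj : Function.Injective (algebraMap (NagataR k n) (NagataK k n)) :=
    IsFractionRing.injective _ _
  ext f
  rw [Ideal.mem_comap, ← Set.image_univ, mem_ideal_span_X_image, ← Set.image_univ,
    mem_ideal_span_X_image, algebraMap_def, support_map_of_injective _ hinj]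

end NagataAux

theorem nagata_localization_at_block_prime (k : Type u) [Field k] (n : ℕ)
    (hp : (nagataPrime k n).IsPrime)
    (hq : (Ideal.span (Set.range (MvPolynomial.X : Fin (n + 1) →
        MvPolynomial (Fin (n + 1))
          (FractionRing (MvPolynomial {i : NagataIdx // i.1 ≠ n} k))))).IsPrime) :
    Nonempty ((@Localization.AtPrime (NagataA k) _ (nagataPrime k n) hp) ≃+*
      (@Localization.AtPrime
        (MvPolynomial (Fin (n + 1)) (FractionRing (MvPolynomial {i : NagataIdx // i.1 ≠ n} k))) _
        (Ideal.span (Set.range MvPolynomial.X)) hq)) := by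
  classical
  haveI := hp
  haveI := hq
  set q : Ideal (NagataKX k n) := Ideal.span (Set.range X) with hq_def
  set p : Ideal (NagataB k n) := q.comap (algebraMap (NagataB k n) (NagataKX k n)) with hp_def
  haveI hpP : p.IsPrime := hq.comap _
  set φ : NagataA k ≃+* NagataB k n := nagataEquivB k n with hφ
  have hmap : (nagataPrime k n).map φ = p :=
    (nagata_map_prime k n).trans (nagata_comap_span k n).symm
  have key : ∀ x, φ x ∈ p ↔ x ∈ nagataPrime k n := fun x => by
    rw [← hmap]; exact Ideal.apply_mem_of_equiv_iff
  have hsub : Submonoid.map φ.toMonoidHom (nagataPrime k n).primeCompl = p.primeCompl := by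
    ext y
    constructor
    · rintro ⟨x, hx, rfl⟩
      exact fun h => hx ((key x).mp h)
    · intro hy
      refine ⟨φ.symm y, fun h => hy ?_, φ.apply_symm_apply y⟩
      have := (key (φ.symm y)).mpr h
      rwa [φ.apply_symm_apply] at this
  let e1 : Localization.AtPrime (nagataPrime k n) ≃+* Localization.AtPrime p :=
    IsLocalization.ringEquivOfRingEquiv (Localization.AtPrime (nagataPrime k n))
      (Localization.AtPrime p) φ hsub
  haveI h2 : IsLocalization.AtPrime (Localization.AtPrime q) p :=
    IsLocalization.isLocalization_isLocalization_atPrime_isLocalization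
      ((nonZeroDivisors (NagataR k n)).map (C : NagataR k n →+* NagataB k n))
      (Localization.AtPrime q) q
  let e2 : Localization.AtPrime p ≃+* Localization.AtPrime q :=
    (IsLocalization.algEquiv p.primeCompl (Localization.AtPrime p)
      (Localization.AtPrime q)).toRingEquiv
  exact ⟨e1.trans e2⟩
end

section
/- Let k be a field, A the polynomial ring over k in blocks of variables x⁽ⁿ⁾₁, …, x⁽ⁿ⁾ₙ for n ≥ 1, 𝔭ₙ the prime generated by the n-th block, S := A \ ⋃ₙ 𝔭ₙ, and B := S⁻¹A. Then every maximal ideal of B is of the form 𝔭ₙB for some n ≥ 1. -/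
universe u

open MvPolynomial

/-- The algebra map killing the `n`-th block of variables. -/
noncomputable def nagataKappa (k : Type u) [Field k] (n : ℕ) : NagataA k →ₐ[k] NagataA k :=
  aeval (fun i : NagataIdx => if i.1 = n then 0 else X i)

lemma nagataKappa_eq_sum (k : Type u) [Field k] (n : ℕ) (f : NagataA k) :
    nagataKappa k n f = ∑ e ∈ f.support,
      if ∀ i ∈ e.support, (i : NagataIdx).1 ≠ n then monomial e (coeff e f) else 0 := by
  classical
  conv_lhs => rw [f.as_sum, map_sum]
  refine Finset.sum_congr rfl fun e _ => ?_
  rw [nagataKappa, aeval_monomial, algebraMap_eq]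
  split_ifs with hgood
  · rw [monomial_eq]
    congr 1
    rw [Finsupp.prod, Finsupp.prod]
    exact Finset.prod_congr rfl fun i hi => by rw [if_neg (hgood i hi)]
  · push_neg at hgood
    obtain ⟨i, hi, hin⟩ := hgood
    rw [Finsupp.prod]
    refine mul_eq_zero_of_right _ (Finset.prod_eq_zero hi ?_)
    rw [if_pos hin, zero_pow (Finsupp.mem_support_iff.mp hi)]

lemma nagataKappa_coeff (k : Type u) [Field k] (n : ℕ) (f : NagataA k) (d : NagataIdx →₀ ℕ) :
    coeff d (nagataKappa k n f) =
      if ∀ i ∈ d.support, (i : NagataIdx).1 ≠ n then coeff d f else 0 := by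
  classical
  rw [nagataKappa_eq_sum, coeff_sum]
  rw [Finset.sum_eq_single d]
  · split_ifs with h
    · rw [coeff_monomial, if_pos rfl]
    · rw [coeff_zero]
  · intro e _ hne
    split_ifs with h
    · rw [coeff_monomial, if_neg hne]
    · rw [coeff_zero]
  · intro hd
    rw [notMem_support_iff.mp hd]
    split_ifs <;> simp

lemma nagataPrime_mem_iff (k : Type u) [Field k] (n : ℕ) (f : NagataA k) :
    f ∈ nagataPrime k n ↔
      ∀ e ∈ f.support, ¬ ∀ i ∈ e.support, (i : NagataIdx).1 ≠ n := by
  rw [nagataPrime, mem_ideal_span_X_image]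
  refine forall₂_congr fun e _ => ?_
  constructor
  · rintro ⟨i, hi, hine⟩ hall
    exact hall i (Finsupp.mem_support_iff.mpr hine) hi
  · intro h
    push_neg at h
    obtain ⟨i, hi, hin⟩ := h
    exact ⟨i, hin, Finsupp.mem_support_iff.mp hi⟩

lemma nagataKappa_eq_zero_iff (k : Type u) [Field k] (n : ℕ) (f : NagataA k) :
    nagataKappa k n f = 0 ↔ f ∈ nagataPrime k n := by
  classical
  rw [nagataPrime_mem_iff]
  constructor
  · intro h0 e he hgood
    have hc := nagataKappa_coeff k n f e
    rw [h0, if_pos hgood, coeff_zero] at hc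
    exact mem_support_iff.mp he hc.symm
  · intro hbad
    ext d
    rw [nagataKappa_coeff, coeff_zero]
    split_ifs with h
    · by_cases hd : d ∈ f.support
      · exact absurd h (hbad d hd)
      · exact notMem_support_iff.mp hd
    · rfl

lemma nagataKappa_support_subset (k : Type u) [Field k] (n : ℕ) (f : NagataA k) :
    (nagataKappa k n f).support ⊆ f.support := by
  intro d hd
  rw [mem_support_iff] at hd ⊢
  rw [nagataKappa_coeff] at hd
  intro h0
  rw [h0] at hd
  split_ifs at hd <;> exact hd rfl

lemma nagataKappa_vars_subset (k : Type u) [Field k] (n : ℕ) (f : NagataA k) :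
    (nagataKappa k n f).vars ⊆ f.vars := by
  intro i hi
  obtain ⟨d, hd, hid⟩ := (mem_vars i).mp hi
  exact (mem_vars i).mpr ⟨d, nagataKappa_support_subset k n f hd, hid⟩

lemma nagataKappa_eq_self (k : Type u) [Field k] (n : ℕ) (f : NagataA k)
    (h : ∀ i ∈ f.vars, (i : NagataIdx).1 ≠ n) : nagataKappa k n f = f := by
  classical
  rw [nagataKappa_eq_sum]
  conv_rhs => rw [f.as_sum]
  refine Finset.sum_congr rfl fun e he => ?_
  exact if_pos fun i hi => h i ((mem_vars i).mpr ⟨e, he, hi⟩)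

lemma nagataKappa_X_self (k : Type u) [Field k] (n : ℕ) (j : Fin (n + 1)) :
    nagataKappa k n (X ⟨n, j⟩ : NagataA k) = 0 := by
  rw [nagataKappa, aeval_X]
  exact if_pos rfl

lemma nagataKappa_X_ne (k : Type u) [Field k] (n m : ℕ) (j : Fin (m + 1)) (h : m ≠ n) :
    nagataKappa k n (X ⟨m, j⟩ : NagataA k) = X ⟨m, j⟩ := by
  rw [nagataKappa, aeval_X]
  exact if_neg h

/-- Infinite prime avoidance for Nagata's primes: an ideal not contained in any `𝔭ₙ`
contains an element outside all of them. -/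
lemma nagata_avoid (k : Type u) [Field k] (I : Ideal (NagataA k))
    (h : ∀ n, ¬ I ≤ nagataPrime k n) :
    ∃ f ∈ I, ∀ n, f ∉ nagataPrime k n := by
  classical
  obtain ⟨f, hfI, hf0⟩ := SetLike.not_le_iff_exists.mp (h 0)
  have hfne : f ≠ 0 := fun h0 => hf0 (h0 ▸ (nagataPrime k 0).zero_mem)
  set Fs : Finset ℕ := f.vars.image Sigma.fst with hFs
  have hFmem : ∀ n, f ∈ nagataPrime k n → n ∈ Fs := by
    intro n hn
    obtain ⟨e, he⟩ := support_nonempty.mpr hfne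
    have := (nagataPrime_mem_iff k n f).mp hn e he
    push_neg at this
    obtain ⟨i, hi, hin⟩ := this
    exact Finset.mem_image.mpr ⟨i, (mem_vars i).mpr ⟨e, he, hi⟩, hin⟩
  have hsub := Ideal.subset_union_prime (s := Fs) (f := fun n => nagataPrime k n) 0 0
    (fun i _ _ _ => nagataPrime_isPrime k i) (I := I)
  have hnsub : ¬ (I : Set (NagataA k)) ⊆ ⋃ n ∈ (Fs : Set ℕ), (nagataPrime k n : Set (NagataA k)) := by
    rw [hsub]
    rintro ⟨n, _, hn⟩
    exact h n hn
  obtain ⟨g, hgI, hgU⟩ := Set.not_subset.mp hnsub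
  have hg : ∀ n ∈ Fs, g ∉ nagataPrime k n := fun n hn hgn => hgU (Set.mem_biUnion hn hgn)
  obtain ⟨n₀, hn₀⟩ := Infinite.exists_notMem_finset Fs
  refine ⟨f + X ⟨n₀, 0⟩ * g, I.add_mem hfI (I.mul_mem_left _ hgI), fun n hn => ?_⟩
  rw [← nagataKappa_eq_zero_iff, map_add, map_mul] at hn
  by_cases hnn : n = n₀
  · subst hnn
    rw [nagataKappa_X_self, zero_mul, add_zero] at hn
    exact hn₀ (hFmem _ ((nagataKappa_eq_zero_iff k _ f).mp hn))
  · rw [nagataKappa_X_ne k n n₀ 0 (fun h' => hnn h'.symm)] at hn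
    by_cases hfn : f ∈ nagataPrime k n
    · rw [(nagataKappa_eq_zero_iff k n f).mpr hfn, zero_add] at hn
      have hgn : nagataKappa k n g ≠ 0 :=
        fun h0 => hg n (hFmem n hfn) ((nagataKappa_eq_zero_iff k n g).mp h0)
      exact mul_ne_zero (X_ne_zero _) hgn hn
    · have happ := congrArg (nagataKappa k n₀) hn
      rw [map_zero, map_add, map_mul, nagataKappa_X_self, zero_mul, add_zero] at happ
      have hself : nagataKappa k n₀ (nagataKappa k n f) = nagataKappa k n f := by
        refine nagataKappa_eq_self k n₀ _ fun i hi hin => ?_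
        exact hn₀ (Finset.mem_image.mpr ⟨i, nagataKappa_vars_subset k n f hi, hin⟩)
      rw [hself] at happ
      exact hfn ((nagataKappa_eq_zero_iff k n f).mp happ)

theorem nagata_maximal_ideals (k : Type u) [Field k] (S : Submonoid (NagataA k))
    (hS : (S : Set (NagataA k)) = (⋃ n : ℕ, (nagataPrime k n : Set (NagataA k)))ᶜ)
    (m : Ideal (Localization S)) (hm : m.IsMaximal) :
    ∃ n : ℕ, m = (nagataPrime k n).map (algebraMap (NagataA k) (Localization S)) := by
  classical
  have hdisj : ∀ n, Disjoint (S : Set (NagataA k)) (nagataPrime k n : Set (NagataA k)) := by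
    intro n
    rw [Set.disjoint_left]
    intro a haS ha
    rw [hS] at haS
    exact haS (Set.mem_iUnion.mpr ⟨n, ha⟩)
  set I := m.comap (algebraMap (NagataA k) (Localization S)) with hI
  have hIU : ∀ f ∈ I, ∃ n, f ∈ nagataPrime k n := by
    intro f hf
    by_contra hc
    push_neg at hc
    have hfS : f ∈ S := by
      rw [← SetLike.mem_coe, hS]
      intro hfU
      obtain ⟨n, hn⟩ := Set.mem_iUnion.mp hfU
      exact hc n hn
    have hu : IsUnit (algebraMap (NagataA k) (Localization S) f) :=
      IsLocalization.map_units (Localization S) ⟨f, hfS⟩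
    exact hm.ne_top (m.eq_top_of_isUnit_mem (Ideal.mem_comap.mp hf) hu)
  have hex : ∃ n, I ≤ nagataPrime k n := by
    by_contra hc
    push_neg at hc
    obtain ⟨f, hfI, hf⟩ := nagata_avoid k I hc
    obtain ⟨n, hn⟩ := hIU f hfI
    exact hf n hn
  obtain ⟨n, hn⟩ := hex
  refine ⟨n, ?_⟩
  have hmap : Ideal.map (algebraMap (NagataA k) (Localization S)) I = m :=
    IsLocalization.map_comap S (Localization S) m
  have hle : m ≤ (nagataPrime k n).map (algebraMap (NagataA k) (Localization S)) := by
    rw [← hmap]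
    exact Ideal.map_mono hn
  have hp : ((nagataPrime k n).map (algebraMap (NagataA k) (Localization S))).IsPrime :=
    IsLocalization.isPrime_of_isPrime_disjoint S (Localization S) _
      (nagataPrime_isPrime k n) (hdisj n)
  exact hm.eq_of_le hp.ne_top hle
end
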